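/- Let U be a complex Banach space and Φ = (φ, v) a finite-dimensional evolution in U (the linear span U_Φ of {φ^t v : t ≥ 0} is finite-dimensional) that is stable. Then the limit x̄ = lim_{t→∞} (1/t) ∑_{m=1}^t φ^m v exists, x̄ is a fixed point of φ (φ x̄ = x̄), and if λ = 1 is not an eigenvalue of the restriction of φ to U_Φ, then x̄ = 0. -/

import Mathlib

/-!
On the span `V` of the orbit of `v`, stability makes every orbit of `φ` bounded. A vector `x`
that is both fixed and of the form `φ y - y` therefore vanishes, because `φⁿ y = y + n • x`; by
rank–nullity, `V` is then the direct sum of the fixed space of `φ` and the range of `φ - 1`.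
Writing `v = x̄ + (φ y - y)` accordingly, `∑_{m=1}^t φᵐ v = t • x̄ + (φ^(t+1) y - φ y)`, and the
second term stays bounded.
-/

open Filter Finset

theorem eq_zero_of_forall_norm_add_nsmul_le (𝕜 : Type*) {E : Type*} [RCLike 𝕜]
    [NormedAddCommGroup E] [NormedSpace 𝕜 E] {x y : E} {C : ℝ}
    (h : ∀ n : ℕ, ‖y + n • x‖ ≤ C) : x = 0 := by
  have hbound (n : ℕ) : n * ‖x‖ ≤ C + ‖y‖ :=
    calc (n : ℝ) * ‖x‖ = ‖(y + n • x) - y‖ := by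
          rw [add_sub_cancel_left, RCLike.norm_nsmul 𝕜, nsmul_eq_mul]
      _ ≤ ‖y + n • x‖ + ‖y‖ := norm_sub_le _ _
      _ ≤ C + ‖y‖ := by gcongr; exact h n
  by_contra hx
  obtain ⟨n, hn⟩ := exists_nat_gt ((C + ‖y‖) / ‖x‖)
  rw [div_lt_iff₀ (norm_pos_iff.mpr hx)] at hn
  linarith [hbound n]

namespace Module.End

section Ring

variable {R M : Type*} [Ring R] [AddCommGroup M] [Module R M] (f : Module.End R M)

theorem apply_mem_span_range_pow_apply (v : M) {x : M}
    (hx : x ∈ Submodule.span R (Set.range fun t : ℕ => (f ^ t) v)) :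
    f x ∈ Submodule.span R (Set.range fun t : ℕ => (f ^ t) v) := by
  have hle : Submodule.span R (Set.range fun t : ℕ => (f ^ t) v) ≤
      (Submodule.span R (Set.range fun t : ℕ => (f ^ t) v)).comap f :=
    Submodule.span_le.mpr <| by
      rintro _ ⟨t, rfl⟩
      exact Submodule.subset_span ⟨t + 1, by simp only [pow_succ', mul_apply]⟩
  exact hle hx

theorem pow_apply_eq_add_nsmul {x y : M} (hx : f x = x) (hy : f y = y + x) (n : ℕ) :
    (f ^ n) y = y + n • x := by
  induction n with
  | zero => simp
  | succ n ih => rw [pow_succ', mul_apply, ih, map_add, map_nsmul, hx, hy, succ_nsmul]; abel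

theorem sum_Icc_pow_apply_of_apply_eq {x : M} (hx : f x = x) (t : ℕ) :
    ∑ m ∈ Icc 1 t, (f ^ m) x = t • x := by
  have hfix (m : ℕ) : (f ^ m) x = x := by
    rw [coe_pow]
    exact Function.IsFixedPt.iterate hx m
  simp [hfix]

theorem sum_Icc_pow_apply_sub (y : M) (t : ℕ) :
    ∑ m ∈ Icc 1 t, (f ^ m) (f y - y) = (f ^ (t + 1)) y - f y := by
  induction t with
  | zero => simp
  | succ t ih =>
    rw [sum_Icc_succ_top (by omega), ih, map_sub, ← mul_apply, ← pow_succ]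
    abel

end Ring

section Normed

variable {𝕜 E : Type*} [RCLike 𝕜] [NormedAddCommGroup E] [NormedSpace 𝕜 E] (f : Module.End 𝕜 E)

def boundedOrbits : Submodule 𝕜 E where
  carrier := {w | ∃ C : ℝ, ∀ n : ℕ, ‖(f ^ n) w‖ ≤ C}
  zero_mem' := ⟨0, by simp⟩
  add_mem' := by
    rintro w₁ w₂ ⟨C₁, h₁⟩ ⟨C₂, h₂⟩
    refine ⟨C₁ + C₂, fun n => ?_⟩
    rw [map_add]
    exact (norm_add_le _ _).trans (add_le_add (h₁ n) (h₂ n))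
  smul_mem' := by
    rintro a w ⟨C, h⟩
    exact ⟨‖a‖ * C, fun n => by rw [map_smul, norm_smul]; gcongr; exact h n⟩

theorem span_range_pow_apply_le_boundedOrbits {v : E} (hv : v ∈ f.boundedOrbits) :
    Submodule.span 𝕜 (Set.range fun t : ℕ => (f ^ t) v) ≤ f.boundedOrbits := by
  obtain ⟨C, hC⟩ := hv
  refine Submodule.span_le.mpr ?_
  rintro _ ⟨t, rfl⟩
  exact ⟨C, fun n => by rw [← mul_apply, ← pow_add]; exact hC _⟩

theorem boundedOrbits_restrict_eq_top {p : Submodule 𝕜 E} (hp : ∀ x ∈ p, f x ∈ p)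
    (hle : p ≤ f.boundedOrbits) : boundedOrbits (f.restrict hp) = ⊤ := by
  refine eq_top_iff.mpr fun w _ => ?_
  obtain ⟨C, hC⟩ := hle w.2
  refine ⟨C, fun n => ?_⟩
  rw [pow_restrict, Submodule.coe_norm, LinearMap.coe_restrict_apply]
  exact hC n

theorem disjoint_ker_sub_one_range_sub_one (hf : f.boundedOrbits = ⊤) :
    Disjoint (LinearMap.ker (f - 1)) (LinearMap.range (f - 1)) := by
  rw [Submodule.disjoint_def]
  rintro _ hker ⟨y, rfl⟩
  have hfix : f ((f - 1) y) = (f - 1) y := by simpa [sub_eq_zero] using hker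
  have hy : f y = y + (f - 1) y := by simp
  obtain ⟨C, hC⟩ : y ∈ f.boundedOrbits := hf ▸ Submodule.mem_top
  exact eq_zero_of_forall_norm_add_nsmul_le 𝕜 fun n => f.pow_apply_eq_add_nsmul hfix hy n ▸ hC n

theorem exists_eq_add_apply_sub [FiniteDimensional 𝕜 E] (hf : f.boundedOrbits = ⊤) (w : E) :
    ∃ x y, f x = x ∧ w = x + (f y - y) := by
  have hcompl : IsCompl (LinearMap.ker (f - 1)) (LinearMap.range (f - 1)) := by
    refine (Submodule.isCompl_iff_disjoint _ _ ?_).mpr (f.disjoint_ker_sub_one_range_sub_one hf)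
    have := LinearMap.finrank_range_add_finrank_ker (f - 1)
    omega
  obtain ⟨x, hx, _, ⟨y, rfl⟩, rfl⟩ :=
    Submodule.mem_sup.mp (hcompl.sup_eq_top ▸ Submodule.mem_top : w ∈ _ ⊔ _)
  exact ⟨x, y, by simpa [sub_eq_zero] using hx, by simp⟩

theorem tendsto_inv_smul_sum_Icc_pow_apply {x y : E} (hx : f x = x) (hy : y ∈ f.boundedOrbits) :
    Tendsto (fun t : ℕ => (t : 𝕜)⁻¹ • ∑ m ∈ Icc 1 t, (f ^ m) (x + (f y - y))) atTop (nhds x) := by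
  obtain ⟨C, hC⟩ := hy
  have hsum (t : ℕ) :
      ∑ m ∈ Icc 1 t, (f ^ m) (x + (f y - y)) = t • x + ((f ^ (t + 1)) y - f y) := by
    simp only [map_add, sum_add_distrib, f.sum_Icc_pow_apply_of_apply_eq hx, sum_Icc_pow_apply_sub]
  have hrest : Tendsto (fun t : ℕ => (t : 𝕜)⁻¹ • ((f ^ (t + 1)) y - f y)) atTop (nhds 0) := by
    refine squeeze_zero_norm (fun t => ?_)
      ((tendsto_const_nhds (x := C + ‖f y‖)).div_atTop tendsto_natCast_atTop_atTop)
    rw [norm_smul, norm_inv, RCLike.norm_natCast, inv_mul_eq_div]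
    gcongr
    exact (norm_sub_le _ _).trans (by gcongr; exact hC _)
  refine (add_zero x ▸ tendsto_const_nhds.add hrest).congr' <|
    (eventually_ne_atTop 0).mono fun t ht => ?_
  dsimp only
  rw [hsum, smul_add, ← Nat.cast_smul_eq_nsmul 𝕜 t x, smul_smul,
    inv_mul_cancel₀ (Nat.cast_ne_zero.mpr ht), one_smul]

end Normed

end Module.End

theorem meanErgodic_limit_of_stable_finiteDimensional_general
    {U : Type*} [NormedAddCommGroup U] [NormedSpace ℂ U]
    (φ : U →L[ℂ] U) (v : U)
    (hfd : FiniteDimensional ℂ (Submodule.span ℂ (Set.range fun t : ℕ => (φ ^ t) v)))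
    (hstable : ∃ c : ℝ, ∀ t : ℕ, ‖(φ ^ t) v‖ ≤ c * ‖v‖) :
    ∃ xbar : U,
      Tendsto (fun t : ℕ => (t : ℝ)⁻¹ • ∑ m ∈ Finset.Icc 1 t, (φ ^ m) v) atTop (nhds xbar) ∧
      φ xbar = xbar ∧
      ((¬ ∃ x ∈ Submodule.span ℂ (Set.range fun t : ℕ => (φ ^ t) v), x ≠ 0 ∧ φ x = x) →
        xbar = 0) := by
  set f : Module.End ℂ U := φ.toLinearMap
  have hpow (t : ℕ) (w : U) : (φ ^ t) w = (f ^ t) w := by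
    rw [← ContinuousLinearMap.toLinearMap_pow]; rfl
  have horbit : (fun t : ℕ => (φ ^ t) v) = fun t => (f ^ t) v := funext fun t => hpow t v
  rw [horbit] at hfd ⊢
  simp only [hpow] at hstable ⊢
  set V := Submodule.span ℂ (Set.range fun t : ℕ => (f ^ t) v)
  have hV (x : U) : x ∈ V → f x ∈ V := f.apply_mem_span_range_pow_apply v
  have hVbdd : V ≤ f.boundedOrbits := by
    obtain ⟨c, hc⟩ := hstable
    exact f.span_range_pow_apply_le_boundedOrbits ⟨c * ‖v‖, hc⟩
  obtain ⟨x, y, hx, hv⟩ := Module.End.exists_eq_add_apply_sub (f.restrict hV)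
    (f.boundedOrbits_restrict_eq_top hV hVbdd) ⟨v, Submodule.subset_span ⟨0, by simp⟩⟩
  have hfix : f x = x := congrArg Subtype.val hx
  have hv' : v = x + (f y - y) := congrArg Subtype.val hv
  refine ⟨x, ?_, hfix, fun hnofix => by_contra fun hne => hnofix ⟨x, x.2, hne, hfix⟩⟩
  simpa only [← Complex.coe_smul, Complex.ofReal_inv, Complex.ofReal_natCast, hv'] using
    f.tendsto_inv_smul_sum_Icc_pow_apply hfix (hVbdd y.2)

/-- For a stable finite-dimensional evolution `(φ, v)` in a complex Banach
space, the limit `x̄` of the state averages exists, is a fixed point of `φ`, and vanishes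
whenever `λ = 1` is not an eigenvalue of the restriction of `φ` to the evolution space. -/
theorem meanErgodic_limit_of_stable_finiteDimensional
    {U : Type*} [NormedAddCommGroup U] [NormedSpace ℂ U] [CompleteSpace U]
    (φ : U →L[ℂ] U) (v : U)
    (hfd : FiniteDimensional ℂ (Submodule.span ℂ (Set.range fun t : ℕ => (φ ^ t) v)))
    (hstable : ∃ c : ℝ, ∀ t : ℕ, ‖(φ ^ t) v‖ ≤ c * ‖v‖) :
    ∃ xbar : U,
      Tendsto (fun t : ℕ => (t : ℝ)⁻¹ • ∑ m ∈ Finset.Icc 1 t, (φ ^ m) v) atTop (nhds xbar) ∧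
      φ xbar = xbar ∧
      ((¬ ∃ x ∈ Submodule.span ℂ (Set.range fun t : ℕ => (φ ^ t) v), x ≠ 0 ∧ φ x = x) →
        xbar = 0) :=
  meanErgodic_limit_of_stable_finiteDimensional_general φ v hfd hstable
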